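/- Assume (A0) and define 𝒱_F := {v ∈ 𝒱 : Σ_{k≥0} (α_k + v β_k) < ∞}. Then exactly one of the following holds: (i) Σ_{k≥0} α_k < ∞ and Σ_{k≥0} β_k < ∞, and 𝒱_F = 𝒱; (ii) Σ_{k≥0} α_k < ∞ and Σ_{k≥0} β_k = ∞, and 𝒱_F = 𝒱 ∩ {0}; (iii) Σ_{k≥0} α_k = Σ_{k≥0} β_k = ∞, and either 𝒱_F = ∅ or 𝒱_F = {v} for some v with v_0 ≤ v < 0. Moreover, if additionally (A1) holds (Σ_{k≥1} 1/a_k = ∞) and Σ_{k≥0} α_k = ∞, then 𝒱_F = ∅. -/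

import Mathlib

open Finset Filter Topology MeasureTheory
open scoped ENNReal

/-- `alphaSeq a b k = (a_1 ⋯ a_k)/(b_1 ⋯ b_k)`, with `alphaSeq a b 0 = 1`. -/
noncomputable def alphaSeq (a b : ℕ → ℝ) (k : ℕ) : ℝ :=
  ∏ i ∈ Finset.Icc 1 k, (a i / b i)

/-- `betaSeq a b k = 1/b_k + a_k/(b_k b_{k-1}) + ⋯ + (a_k ⋯ a_2)/(b_k ⋯ b_1)`,
with `betaSeq a b 0 = 0`. -/
noncomputable def betaSeq (a b : ℕ → ℝ) (k : ℕ) : ℝ :=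
  ∑ j ∈ Finset.Icc 1 k, (∏ i ∈ Finset.Icc (j+1) k, a i) / (∏ i ∈ Finset.Icc j k, b i)

/-- The stable traffic equation: `ρ 0 = 1` and
`(b_i + a_{i+1}) ρ_i = a_i ρ_{i-1} + b_{i+1} ρ_{i+1}` for all `i ≥ 1`. -/
def IsSTE (a b : ℕ → ℝ) (ρ : ℕ → ℝ) : Prop :=
  ρ 0 = 1 ∧ ∀ i, 1 ≤ i → (b i + a (i+1)) * ρ i = a i * ρ (i-1) + b (i+1) * ρ (i+1)

/-- An admissible solution of the stable traffic equation: moreover `ρ k ∈ (0,1)` for `k ≥ 1`. -/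
def IsAdmissible (a b : ℕ → ℝ) (ρ : ℕ → ℝ) : Prop :=
  IsSTE a b ρ ∧ ∀ k, 1 ≤ k → ρ k ∈ Set.Ioo (0:ℝ) 1

/-- The set `𝒱` of `v` such that `α + v β` is an admissible solution. -/
def speedSet (a b : ℕ → ℝ) : Set ℝ :=
  {v : ℝ | IsAdmissible a b (fun k => alphaSeq a b k + v * betaSeq a b k)}

/-!
Write `ρᵛ := α + v β`. Two such sequences differ by a multiple of `β`, so when `β` is not summable
at most one `ρᵛ` is. Since `α_{k+1} ≤ a_1 β_{k+1}`, divergence of `Σ α` forces divergence of `Σ β`,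
and `α ≤ ρᵛ` for `v ≥ 0` forces `v < 0` for a summable `ρᵛ`; positivity of `ρᵛ` gives
`v > -α_k/β_k → v_0`. Finally `ρᵛ` satisfies `b_{k+1} ρᵛ_{k+1} = a_{k+1} ρᵛ_k + v`, so for a
positive `ρᵛ` with `v < 0` we get `1/a_{k+1} < ρᵛ_k/(-v)`, and summability of `ρᵛ` would
contradict (A1).
-/

lemma summable_of_summable_add_mul_of_ne {ι : Type*} {f g : ι → ℝ} {v w : ℝ}
    (hv : Summable fun k => f k + v * g k) (hw : Summable fun k => f k + w * g k) (hvw : v ≠ w) :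
    Summable g := by
  have hdiff : Summable fun k => (v - w) * g k := by
    have hsub : (fun k => (v - w) * g k) = fun k => (f k + v * g k) - (f k + w * g k) := by
      funext k
      ring
    exact hsub ▸ hv.sub hw
  simpa [sub_ne_zero.2 hvw] using hdiff.mul_left (v - w)⁻¹

section Sequences

variable {a b : ℕ → ℝ}

@[simp]
lemma alphaSeq_zero : alphaSeq a b 0 = 1 := by simp [alphaSeq]

@[simp]
lemma betaSeq_zero : betaSeq a b 0 = 0 := by simp [betaSeq]

lemma alphaSeq_succ (k : ℕ) : alphaSeq a b (k + 1) = alphaSeq a b k * (a (k + 1) / b (k + 1)) :=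
  prod_Icc_succ_top (by omega) _

lemma betaSeq_succ (k : ℕ) :
    betaSeq a b (k + 1) = a (k + 1) / b (k + 1) * betaSeq a b k + 1 / b (k + 1) := by
  rw [betaSeq, sum_Icc_succ_top (by omega), Icc_eq_empty_of_lt (Nat.lt_succ_self _), Icc_self,
    prod_empty, prod_singleton, betaSeq, mul_sum]
  congr 1
  refine sum_congr rfl fun j hj => ?_
  rw [prod_Icc_succ_top (by simp at hj; omega), prod_Icc_succ_top (by simp at hj; omega)]
  ring

lemma alphaSeq_pos (ha : ∀ k, 1 ≤ k → 0 < a k) (hb : ∀ k, 1 ≤ k → 0 < b k) (k : ℕ) :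
    0 < alphaSeq a b k :=
  prod_pos fun i hi => div_pos (ha i (mem_Icc.1 hi).1) (hb i (mem_Icc.1 hi).1)

lemma betaSeq_nonneg (ha : ∀ k, 1 ≤ k → 0 < a k) (hb : ∀ k, 1 ≤ k → 0 < b k) (k : ℕ) :
    0 ≤ betaSeq a b k := by
  induction k with
  | zero => simp
  | succ k ih =>
    rw [betaSeq_succ]
    have := ha (k + 1) (by omega)
    have := hb (k + 1) (by omega)
    positivity

lemma betaSeq_pos (ha : ∀ k, 1 ≤ k → 0 < a k) (hb : ∀ k, 1 ≤ k → 0 < b k) {k : ℕ}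
    (hk : 1 ≤ k) : 0 < betaSeq a b k := by
  obtain ⟨k, rfl⟩ := Nat.exists_eq_add_of_le' hk
  rw [betaSeq_succ]
  have := betaSeq_nonneg ha hb k
  have := ha (k + 1) (by omega)
  have := hb (k + 1) (by omega)
  positivity

lemma alphaSeq_succ_le_mul_betaSeq (ha : ∀ k, 1 ≤ k → 0 < a k) (hb : ∀ k, 1 ≤ k → 0 < b k)
    (k : ℕ) : alphaSeq a b (k + 1) ≤ a 1 * betaSeq a b (k + 1) := by
  induction k with
  | zero => simp [alphaSeq_succ, betaSeq_succ, div_eq_mul_inv]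
  | succ k ih =>
    rw [alphaSeq_succ, betaSeq_succ (k + 1)]
    have hquot : 0 < a (k + 2) / b (k + 2) := div_pos (ha _ (by omega)) (hb _ (by omega))
    have hinv : 0 < 1 / b (k + 2) := one_div_pos.2 (hb _ (by omega))
    have := ha 1 le_rfl
    nlinarith [mul_le_mul_of_nonneg_right ih hquot.le]

lemma summable_alphaSeq_of_summable_betaSeq (ha : ∀ k, 1 ≤ k → 0 < a k)
    (hb : ∀ k, 1 ≤ k → 0 < b k) (hβ : Summable (betaSeq a b)) : Summable (alphaSeq a b) := by
  refine (summable_nat_add_iff 1).1 <| Summable.of_nonneg_of_le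
    (fun k => (alphaSeq_pos ha hb _).le) (alphaSeq_succ_le_mul_betaSeq ha hb) ?_
  exact ((summable_nat_add_iff 1).2 hβ).mul_left _

lemma summable_alphaSeq_of_summable_add_mul_betaSeq (ha : ∀ k, 1 ≤ k → 0 < a k)
    (hb : ∀ k, 1 ≤ k → 0 < b k) {v : ℝ} (hv : 0 ≤ v)
    (hsum : Summable fun k => alphaSeq a b k + v * betaSeq a b k) : Summable (alphaSeq a b) :=
  hsum.of_nonneg_of_le (fun k => (alphaSeq_pos ha hb k).le)
    fun k => le_add_of_nonneg_right (mul_nonneg hv (betaSeq_nonneg ha hb k))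

lemma mul_add_mul_betaSeq_succ (hb : ∀ k, 1 ≤ k → 0 < b k) (v : ℝ) (k : ℕ) :
    b (k + 1) * (alphaSeq a b (k + 1) + v * betaSeq a b (k + 1)) =
      a (k + 1) * (alphaSeq a b k + v * betaSeq a b k) + v := by
  have := (hb (k + 1) (by omega)).ne'
  rw [alphaSeq_succ, betaSeq_succ]
  field_simp
  ring

lemma le_of_tendsto_of_add_mul_betaSeq_pos (ha : ∀ k, 1 ≤ k → 0 < a k)
    (hb : ∀ k, 1 ≤ k → 0 < b k) {v₀ v : ℝ}
    (hv₀ : Tendsto (fun k => alphaSeq a b k / betaSeq a b k) atTop (𝓝 (-v₀)))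
    (hpos : ∀ k, 1 ≤ k → 0 < alphaSeq a b k + v * betaSeq a b k) : v₀ ≤ v := by
  refine le_of_tendsto (by simpa using hv₀.neg) ?_
  filter_upwards [eventually_ge_atTop 1] with k hk
  rw [← neg_div, div_le_iff₀ (betaSeq_pos ha hb hk)]
  linarith [hpos k hk]

lemma summable_one_div_succ_of_summable_add_mul_betaSeq (ha : ∀ k, 1 ≤ k → 0 < a k)
    (hb : ∀ k, 1 ≤ k → 0 < b k) {v : ℝ} (hv : v < 0)
    (hpos : ∀ k, 1 ≤ k → 0 < alphaSeq a b k + v * betaSeq a b k)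
    (hsum : Summable fun k => alphaSeq a b k + v * betaSeq a b k) :
    Summable fun k => 1 / a (k + 1) := by
  refine (hsum.div_const (-v)).of_nonneg_of_le (fun k => (one_div_pos.2 (ha _ (by omega))).le)
    fun k => ?_
  have hak := ha (k + 1) (by omega)
  have hrec := mul_add_mul_betaSeq_succ (a := a) hb v k
  have : -v ≤ a (k + 1) * (alphaSeq a b k + v * betaSeq a b k) := by
    nlinarith [mul_pos (hb (k + 1) (by omega)) (hpos (k + 1) (by omega))]
  rw [div_le_div_iff₀ hak (by linarith)]
  linarith

end Sequences

/-- `𝒱_F` in the paper's notation. -/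
def finiteSpeedSet (a b : ℕ → ℝ) : Set ℝ :=
  {v ∈ speedSet a b | Summable fun k : ℕ => alphaSeq a b k + v * betaSeq a b k}

section FiniteSpeedSet

variable {a b : ℕ → ℝ}

lemma add_mul_betaSeq_pos_of_mem_speedSet {v : ℝ} (hv : v ∈ speedSet a b) {k : ℕ} (hk : 1 ≤ k) :
    0 < alphaSeq a b k + v * betaSeq a b k :=
  (hv.2 k hk).1

lemma finiteSpeedSet_eq_speedSet (hα : Summable (alphaSeq a b)) (hβ : Summable (betaSeq a b)) :
    finiteSpeedSet a b = speedSet a b :=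
  Set.sep_eq_self_iff_mem_true.2 fun v _ => hα.add (hβ.mul_left v)

lemma finiteSpeedSet_subsingleton (hβ : ¬ Summable (betaSeq a b)) :
    (finiteSpeedSet a b).Subsingleton :=
  fun _ hv _ hw => by_contra fun hvw => hβ (summable_of_summable_add_mul_of_ne hv.2 hw.2 hvw)

lemma finiteSpeedSet_eq_inter_zero (hα : Summable (alphaSeq a b)) (hβ : ¬ Summable (betaSeq a b)) :
    finiteSpeedSet a b = speedSet a b ∩ {0} := by
  have hzero : Summable fun k => alphaSeq a b k + 0 * betaSeq a b k := by simpa using hα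
  ext v
  constructor
  · exact fun hv => ⟨hv.1, by_contra fun h0 =>
      hβ (summable_of_summable_add_mul_of_ne hv.2 hzero h0)⟩
  · rintro ⟨hv, rfl⟩
    exact ⟨hv, hzero⟩

lemma neg_of_mem_finiteSpeedSet (ha : ∀ k, 1 ≤ k → 0 < a k) (hb : ∀ k, 1 ≤ k → 0 < b k)
    (hα : ¬ Summable (alphaSeq a b)) {v : ℝ} (hv : v ∈ finiteSpeedSet a b) : v < 0 :=
  not_le.1 fun h => hα (summable_alphaSeq_of_summable_add_mul_betaSeq ha hb h hv.2)

lemma finiteSpeedSet_eq_empty (ha : ∀ k, 1 ≤ k → 0 < a k) (hb : ∀ k, 1 ≤ k → 0 < b k)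
    (hA1 : ¬ Summable fun k : ℕ => 1 / a (k + 1)) (hα : ¬ Summable (alphaSeq a b)) :
    finiteSpeedSet a b = ∅ :=
  Set.eq_empty_of_forall_notMem fun _ hv => hA1 <|
    summable_one_div_succ_of_summable_add_mul_betaSeq ha hb (neg_of_mem_finiteSpeedSet ha hb hα hv)
      (fun _ hk => add_mul_betaSeq_pos_of_mem_speedSet hv.1 hk) hv.2

end FiniteSpeedSet

/-- Under (A0), with 𝒱_F := {v ∈ 𝒱 : Σ_k (alpha_k + v beta_k) < ∞}, exactly one
of: (i) Σ alpha < ∞ and Σ beta < ∞, and 𝒱_F = 𝒱; (ii) Σ alpha < ∞ and Σ beta = ∞, and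
𝒱_F = 𝒱 ∩ {0}; (iii) Σ alpha = Σ beta = ∞, and either 𝒱_F = ∅ or 𝒱_F = {v} for some
v0 ≤ v < 0. Moreover, if also (A1) holds and Σ alpha = ∞, then 𝒱_F = ∅. -/
theorem stmt16 (a b : ℕ → ℝ) (ha : ∀ k, 1 ≤ k → 0 < a k) (hb : ∀ k, 1 ≤ k → 0 < b k)
    (v0 : ℝ)
    (hv0 : Filter.Tendsto (fun k => alphaSeq a b k / betaSeq a b k) Filter.atTop (𝓝 (-v0)))
    (VF : Set ℝ)
    (hVF : VF = {v ∈ speedSet a b |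
      Summable (fun k : ℕ => alphaSeq a b k + v * betaSeq a b k)}) :
    ((Summable (alphaSeq a b) ∧ Summable (betaSeq a b) ∧ VF = speedSet a b) ∨
     (Summable (alphaSeq a b) ∧ ¬ Summable (betaSeq a b) ∧
        VF = speedSet a b ∩ {0}) ∨
     (¬ Summable (alphaSeq a b) ∧ ¬ Summable (betaSeq a b) ∧
        (VF = ∅ ∨ ∃ v : ℝ, v0 ≤ v ∧ v < 0 ∧ VF = {v}))) ∧
    (¬ Summable (fun k : ℕ => 1 / a (k+1)) → ¬ Summable (alphaSeq a b) → VF = ∅) := by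
  change VF = finiteSpeedSet a b at hVF
  subst hVF
  refine ⟨?_, finiteSpeedSet_eq_empty ha hb⟩
  by_cases hα : Summable (alphaSeq a b)
  · by_cases hβ : Summable (betaSeq a b)
    · exact Or.inl ⟨hα, hβ, finiteSpeedSet_eq_speedSet hα hβ⟩
    · exact Or.inr <| Or.inl ⟨hα, hβ, finiteSpeedSet_eq_inter_zero hα hβ⟩
  have hβ : ¬ Summable (betaSeq a b) := mt (summable_alphaSeq_of_summable_betaSeq ha hb) hα
  refine Or.inr <| Or.inr ⟨hα, hβ, ?_⟩
  obtain hempty | ⟨v, hVF⟩ := (finiteSpeedSet_subsingleton hβ).eq_empty_or_singleton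
  · exact Or.inl hempty
  have hv : v ∈ finiteSpeedSet a b := hVF ▸ rfl
  exact Or.inr ⟨v, le_of_tendsto_of_add_mul_betaSeq_pos ha hb hv0
    (fun _ hk => add_mul_betaSeq_pos_of_mem_speedSet hv.1 hk),
    neg_of_mem_finiteSpeedSet ha hb hα hv, hVF⟩
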